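/- Let A = {0,1,2} and f as above (f(x,0,y)=1 iff x=1∨y=1; f(x,1,y)=2 iff x=2∨y=2 else 1; f(x,2,y)=0 iff x=1∨y=1 else 2). Define H on A^ℕ by H(x)_0 = 1 and H(x)_i = f(x_{i-1},x_i,x_{i+1}) for i ≥ 1. Then for every finite word u ∈ A* and every n ∈ ℕ there exists m > n with H^m(u2^∞)_1 = 2, where u2^∞ denotes the configuration beginning with u followed by infinitely many 2s. -/
import Mathlib

/-- The local rule of the sensitive ν-CA example on `A = {0,1,2}`. -/
def fRule18 (x y z : Fin 3) : Fin 3 :=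
  if y = 0 then (if x = 1 ∨ z = 1 then 1 else 0)
  else if y = 1 then (if x = 2 ∨ z = 2 then 2 else 1)
  else (if x = 1 ∨ z = 1 then 0 else 2)

lemma tri18 : ∀ v : Fin 3, v = 0 ∨ v = 1 ∨ v = 2 := by decide

lemma frz18 : ∀ a b c : Fin 3, a ≠ 1 → b ≠ 1 → c ≠ 1 → fRule18 a b c = b := by decide

lemma fA18 : ∀ c : Fin 3, fRule18 1 0 c = 1 := by decide
lemma fB18 : ∀ a : Fin 3, fRule18 a 1 2 = 2 := by decide
lemma fC18 : ∀ c : Fin 3, fRule18 1 2 c = 0 := by decide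
lemma fT18 : fRule18 2 2 2 = 2 := by decide

/-- Invariant: `y 0 = 1`, `R` is the rightmost `1`, `T` the first `2` beyond `R`,
and everything strictly between `R` and `T` is `0`. -/
def PInv18 (y : ℕ → Fin 3) (R T : ℕ) : Prop :=
  y 0 = 1 ∧ y R = 1 ∧ (∀ i, R < i → y i ≠ 1) ∧ R < T ∧ y T = 2 ∧
    ∀ j, R < j → j < T → y j = 0

lemma step18 (H : (ℕ → Fin 3) → (ℕ → Fin 3))
    (hH : ∀ (x : ℕ → Fin 3) (i : ℕ),
      H x i = if i = 0 then 1 else fRule18 (x (i - 1)) (x i) (x (i + 1)))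
    (y : ℕ → Fin 3) (R T : ℕ) (hP : PInv18 y R T) (hne : y 1 ≠ 2) :
    ∃ R' T', PInv18 (H y) R' T' ∧ T' * T' + (T' - R') < T * T + (T - R) := by
  obtain ⟨h0, hR1, hRmax, hRT, hT2, hmid⟩ := hP
  have hstep : ∀ i : ℕ, i ≠ 0 → H y i = fRule18 (y (i-1)) (y i) (y (i+1)) := by
    intro i hi; rw [hH]; exact if_neg hi
  have h0' : H y 0 = 1 := by rw [hH]; rfl
  have hy1 : y (R+1) ≠ 1 := hRmax _ (Nat.lt_succ_self R)
  rcases tri18 (y (R+1)) with hcase | hcase | hcase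
  · -- Case A : front advances, T unchanged
    have hT : R + 1 < T := by
      rcases Nat.lt_or_ge (R+1) T with h | h
      · exact h
      · exfalso
        have : T = R + 1 := by omega
        rw [this, hcase] at hT2; exact absurd hT2 (by decide)
    refine ⟨R+1, T, ⟨h0', ?_, ?_, hT, ?_, ?_⟩, ?_⟩
    · rw [hstep (R+1) (by omega)]
      simp only [Nat.add_sub_cancel]
      rw [hR1, hcase]; exact fA18 _
    · intro i hi
      rw [hstep i (by omega)]
      rw [frz18 _ _ _ (hRmax _ (by omega)) (hRmax _ (by omega)) (hRmax _ (by omega))]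
      exact hRmax _ (by omega)
    · rw [hstep T (by omega)]
      rw [frz18 _ _ _ (hRmax _ (by omega)) (hRmax _ (by omega)) (hRmax _ (by omega))]
      exact hT2
    · intro j hj1 hj2
      rw [hstep j (by omega)]
      rw [frz18 _ _ _ (hRmax _ (by omega)) (hRmax _ (by omega)) (hRmax _ (by omega))]
      exact hmid _ (by omega) hj2
    · omega
  · exact absurd hcase hy1
  · -- Case B : wall hit, T decreases
    have hRpos : 1 ≤ R := by
      by_contra h
      have hR0 : R = 0 := by omega
      rw [hR0] at hcase
      exact hne hcase
    have hTeq : T = R + 1 := by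
      rcases Nat.lt_or_ge (R+1) T with h | h
      · exfalso
        have := hmid (R+1) (by omega) h
        rw [this] at hcase; exact absurd hcase (by decide)
      · omega
    have hHyR : H y R = 2 := by
      rw [hstep R (by omega), hR1, hcase]; exact fB18 _
    have hHyR1 : H y (R+1) = 0 := by
      rw [hstep (R+1) (by omega)]
      simp only [Nat.add_sub_cancel]
      rw [hR1, hcase]; exact fC18 _
    have hfroz : ∀ j, R + 2 ≤ j → H y j = y j := by
      intro j hj
      rw [hstep j (by omega)]
      exact frz18 _ _ _ (hRmax _ (by omega)) (hRmax _ (by omega)) (hRmax _ (by omega))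
    have hup : ∀ i, R < i → H y i ≠ 1 := by
      intro i hi
      rcases Nat.lt_or_ge i (R+2) with h | h
      · have : i = R + 1 := by omega
        rw [this, hHyR1]; decide
      · rw [hfroz i h]; exact hRmax _ (by omega)
    set R' := Nat.findGreatest (fun i => H y i = 1) R with hR'def
    have hR'spec : H y R' = 1 := by
      have := Nat.findGreatest_spec (P := fun i => H y i = 1) (m := 0) (Nat.zero_le R) h0'
      simpa [hR'def] using this
    have hR'le : R' ≤ R := Nat.findGreatest_le R
    have hR'lt : R' < R := by
      rcases Nat.lt_or_ge R' R with h | h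
      · exact h
      · exfalso
        have : R' = R := by omega
        rw [this, hHyR] at hR'spec; exact absurd hR'spec (by decide)
    have hR'max : ∀ i, R' < i → H y i ≠ 1 := by
      intro i hi
      rcases le_or_gt i R with h | h
      · exact Nat.findGreatest_is_greatest hi h
      · exact hup i h
    have hex : ∃ j, R' < j ∧ H y j = 2 := ⟨R, hR'lt, hHyR⟩
    set T' := Nat.find hex with hT'def
    obtain ⟨hT'gt, hT'2⟩ := Nat.find_spec hex
    have hT'le : T' ≤ R := Nat.find_min' hex ⟨hR'lt, hHyR⟩
    refine ⟨R', T', ⟨h0', hR'spec, hR'max, hT'gt, hT'2, ?_⟩, ?_⟩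
    · intro j hj1 hj2
      have hne2 : ¬ (R' < j ∧ H y j = 2) := Nat.find_min hex hj2
      have hne2' : H y j ≠ 2 := fun h => hne2 ⟨hj1, h⟩
      have hne1 : H y j ≠ 1 := hR'max _ hj1
      rcases tri18 (H y j) with h | h | h
      · exact h
      · exact absurd h hne1
      · exact absurd h hne2'
    · have hmul : T' * T' ≤ R * R := Nat.mul_le_mul hT'le hT'le
      have hTT : T * T = R * R + 2 * R + 1 := by rw [hTeq]; ring
      omega

lemma desc18 (H : (ℕ → Fin 3) → (ℕ → Fin 3))
    (hH : ∀ (x : ℕ → Fin 3) (i : ℕ),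
      H x i = if i = 0 then 1 else fRule18 (x (i - 1)) (x i) (x (i + 1))) :
    ∀ (μ : ℕ) (y : ℕ → Fin 3) (R T : ℕ), PInv18 y R T →
      T * T + (T - R) ≤ μ → y 1 ≠ 2 →
      (∀ m, 1 ≤ m → H^[m] y 1 ≠ 2) → False := by
  intro μ
  induction μ with
  | zero =>
    intro y R T hP hle _ _
    have hRT := hP.2.2.2.1
    have : 1 ≤ T := by omega
    nlinarith [hP.2.2.2.1]
  | succ n ih =>
    intro y R T hP hle hself hfut
    obtain ⟨R', T', hP', hlt⟩ := step18 H hH y R T hP hself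
    have hself' : H y 1 ≠ 2 := by
      have := hfut 1 le_rfl
      simpa using this
    have hfut' : ∀ m, 1 ≤ m → H^[m] (H y) 1 ≠ 2 := by
      intro m hm
      have := hfut (m+1) (by omega)
      rwa [Function.iterate_succ_apply] at this
    exact ih (H y) R' T' hP' (by omega) hself' hfut'

/-- For the ν-CA `H` on `A^ℕ` with `H(x)_0 = 1` and `H(x)_i = f(x_{i-1},x_i,x_{i+1})`
for `i ≥ 1`: for every finite word `u` (of length `l`) and every `n` there is `m > n`
with `H^m(u2^∞)_1 = 2`. -/
theorem stmt_18
    (H : (ℕ → Fin 3) → (ℕ → Fin 3))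
    (hH : ∀ (x : ℕ → Fin 3) (i : ℕ),
      H x i = if i = 0 then 1 else fRule18 (x (i - 1)) (x i) (x (i + 1))) :
    ∀ (l : ℕ) (u : ℕ → Fin 3) (n : ℕ),
      ∃ m > n, H^[m] (fun i => if i < l then u i else 2) 1 = 2 := by
  intro l u n
  set x₀ : ℕ → Fin 3 := fun i => if i < l then u i else 2 with hx₀
  by_contra hcon
  push_neg at hcon
  -- tail propagation
  have htail : ∀ m i, l + m ≤ i → H^[m] x₀ i = 2 := by
    intro m
    induction m with
    | zero =>
      intro i hi
      simp only [Function.iterate_zero, id_eq, hx₀]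
      exact if_neg (by omega)
    | succ k ihk =>
      intro i hi
      rw [Function.iterate_succ_apply']
      rw [hH]
      have h1 : i ≠ 0 := by omega
      rw [if_neg h1]
      rw [ihk (i-1) (by omega), ihk i (by omega), ihk (i+1) (by omega)]
      exact fT18
  set y : ℕ → Fin 3 := H^[n+1] x₀ with hy
  have y0 : y 0 = 1 := by
    rw [hy, Function.iterate_succ_apply', hH]; rfl
  set L := l + (n + 1) with hL
  have ytail : ∀ i, L ≤ i → y i = 2 := fun i hi => htail (n+1) i (by omega)
  set R := Nat.findGreatest (fun i => y i = 1) L with hRdef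
  have hRspec : y R = 1 := by
    have := Nat.findGreatest_spec (P := fun i => y i = 1) (m := 0) (Nat.zero_le L) y0
    simpa [hRdef] using this
  have hRle : R ≤ L := Nat.findGreatest_le L
  have hRmax : ∀ i, R < i → y i ≠ 1 := by
    intro i hi
    rcases le_or_gt i L with h | h
    · exact Nat.findGreatest_is_greatest hi h
    · rw [ytail i (by omega)]; decide
  have hex : ∃ j, R < j ∧ y j = 2 := ⟨L + R + 1, by omega, ytail _ (by omega)⟩
  set T := Nat.find hex with hTdef
  obtain ⟨hTgt, hT2⟩ := Nat.find_spec hex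
  have hP : PInv18 y R T := by
    refine ⟨y0, hRspec, hRmax, hTgt, hT2, ?_⟩
    intro j hj1 hj2
    have hne2 : ¬ (R < j ∧ y j = 2) := Nat.find_min hex hj2
    have hne2' : y j ≠ 2 := fun h => hne2 ⟨hj1, h⟩
    have hne1 : y j ≠ 1 := hRmax _ hj1
    rcases tri18 (y j) with h | h | h
    · exact h
    · exact absurd h hne1
    · exact absurd h hne2'
  have hself : y 1 ≠ 2 := hcon (n+1) (by omega)
  have hfut : ∀ m, 1 ≤ m → H^[m] y 1 ≠ 2 := by
    intro m hm
    rw [hy, ← Function.iterate_add_apply]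
    exact hcon (m + (n+1)) (by omega)
  exact desc18 H hH (T * T + (T - R)) y R T hP le_rfl hself hfut
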